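/- Neither the equivalent chase (E-chase) nor the breadth-first equivalent chase (bf-E-chase) preserves ancestry. A witness is the knowledge base with F = {p(x₁,x₁), p(x₂,x₂), r(x₁,x₂)} (x₁, x₂ variables) and 𝓡 = {p(x,x) ∧ p(y,y) → p(x,y) ∧ p(y,x)}: the bf-E-derivation D applying the single trigger (R,{x↦x₁, y↦x₂}) produces the atom p(x₁,x₂) at rank 1 with prime ancestors F' = {p(x₁,x₁), p(x₂,x₂)}, yet there is no E-derivation of depth 1 from (F',𝓡), since the factbase resulting from any trigger application on F' admits a homomorphism back to F'. -/

import Mathlib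

/-!
In the derivation `D` that applies `(R, {x ↦ x₁, y ↦ x₂})` to `F`, the atom `p(x₁,x₂)` is
new at rank 1: the atom `r(x₁,x₂)` forces any homomorphism `F ∪ output → F` to fix `x₁` and
`x₂`, and `p(x₁,x₂) ∉ F`. Its prime ancestors form `F' = {p(x₁,x₁), p(x₂,x₂)}`. On `F'`, though,
every trigger of `R` has output `p(u,v), p(v,u)` with `u, v ∈ {x₁, x₂}`, and `F'` together with
that output folds onto `p(x₁,x₁)`. So no trigger is E-applicable on `F'`, and every
E-derivation from `F'` is empty.
-/

namespace ChasePaper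

/-- Terms are variables or constants, both indexed by natural numbers. -/
inductive Term : Type where
  | var : ℕ → Term
  | const : ℕ → Term
deriving DecidableEq

instance : Encodable Term :=
  Encodable.ofEquiv (ℕ ⊕ ℕ)
    { toFun := fun t => match t with
        | .var n => Sum.inl n
        | .const n => Sum.inr n
      invFun := fun s => match s with
        | .inl n => .var n
        | .inr n => .const n
      left_inv := by intro t; cases t <;> rfl
      right_inv := by intro s; cases s <;> rfl }

/-- An atom is a predicate together with a list of argument terms. -/
structure Atom : Type where
  pred : ℕ
  args : List Term
deriving DecidableEq

instance : Encodable Atom :=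
  Encodable.ofEquiv (ℕ × List Term)
    { toFun := fun A => (A.pred, A.args)
      invFun := fun p => ⟨p.1, p.2⟩
      left_inv := by intro A; rfl
      right_inv := by intro p; rfl }

/-- The variables occurring in a term. -/
def Term.vars : Term → Finset ℕ
  | .var n => {n}
  | .const _ => ∅

/-- The variables occurring in an atom. -/
def Atom.vars (A : Atom) : Finset ℕ := A.args.toFinset.biUnion Term.vars

/-- Applying a substitution to a term. -/
def Term.subst (σ : ℕ → Term) : Term → Term
  | .var n => σ n
  | .const c => .const c

/-- Applying a substitution to an atom. -/
def Atom.subst (σ : ℕ → Term) (A : Atom) : Atom := ⟨A.pred, A.args.map (Term.subst σ)⟩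

/-- The variables occurring in a set of atoms. -/
def setVars (F : Set Atom) : Set ℕ := ⋃ A ∈ F, ↑A.vars

/-- `σ` is a homomorphism from the atomset `F` to the atomset `F'`. -/
def IsHomOn (σ : ℕ → Term) (F F' : Set Atom) : Prop := ∀ A ∈ F, A.subst σ ∈ F'

/-- `σ` is a retraction from `F` to its subset `F'`: it is the identity on the
terms of `F'` and maps `F` onto `F'`. -/
def IsRetraction (σ : ℕ → Term) (F F' : Set Atom) : Prop :=
  F' ⊆ F ∧ (∀ x ∈ setVars F', σ x = Term.var x) ∧ (Atom.subst σ) '' F = F'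

/-- An existential rule, given by its body and its head. -/
structure Rule : Type where
  body : List Atom
  head : List Atom
deriving DecidableEq

instance : Encodable Rule :=
  Encodable.ofEquiv (List Atom × List Atom)
    { toFun := fun R => (R.body, R.head)
      invFun := fun p => ⟨p.1, p.2⟩
      left_inv := by intro R; rfl
      right_inv := by intro p; rfl }

def Rule.bodyVars (R : Rule) : Finset ℕ := R.body.toFinset.biUnion Atom.vars
def Rule.headVars (R : Rule) : Finset ℕ := R.head.toFinset.biUnion Atom.vars

/-- The frontier of a rule: the variables shared by its body and its head. -/
def Rule.frontier (R : Rule) : Finset ℕ := R.bodyVars ∩ R.headVars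

/-- The existential variables of a rule: head variables not occurring in the body. -/
def Rule.existVars (R : Rule) : Finset ℕ := R.headVars \ R.bodyVars

/-- The substitution determined by an association list. -/
def SubL.fn (σ : List (ℕ × Term)) : ℕ → Term := fun n =>
  match σ.find? (fun p => p.1 == n) with
  | some p => p.2
  | none => Term.var n

/-- A trigger: a rule together with a substitution, represented as an association list. -/
structure Trigger : Type where
  rule : Rule
  π : List (ℕ × Term)
deriving DecidableEq

instance : Encodable Trigger :=
  Encodable.ofEquiv (Rule × List (ℕ × Term))
    { toFun := fun t => (t.rule, t.π)
      invFun := fun p => ⟨p.1, p.2⟩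
      left_inv := by intro t; rfl
      right_inv := by intro p; rfl }

/-- The homomorphism π of a trigger, as a substitution. -/
def Trigger.πfn (t : Trigger) : ℕ → Term := SubL.fn t.π

/-- The fresh variable `z_t` associated to trigger `t` and existential variable `z`. -/
def Trigger.freshVar (t : Trigger) (z : ℕ) : Term :=
  Term.var (Nat.pair (Encodable.encode t) z)

/-- The extension `π^s` of `π`, mapping each existential variable of the head to a
fresh variable indexed by the trigger. -/
def Trigger.πs (t : Trigger) : ℕ → Term := fun n =>
  if n ∈ t.rule.existVars then t.freshVar n else t.πfn n

/-- support(t) = π(body(R)). -/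
def Trigger.support (t : Trigger) : Finset Atom :=
  (t.rule.body.map (Atom.subst t.πfn)).toFinset

/-- output(t) = π^s(head(R)). -/
def Trigger.output (t : Trigger) : Finset Atom :=
  (t.rule.head.map (Atom.subst t.πs)).toFinset

/-- A trigger is applicable on a factbase `F` if π maps the rule body into `F`. -/
def Trigger.applicableOn (t : Trigger) (F : Finset Atom) : Prop := t.support ⊆ F

instance (t : Trigger) (F : Finset Atom) : Decidable (t.applicableOn F) :=
  inferInstanceAs (Decidable (t.support ⊆ F))

/-- The factbase obtained after `i` steps from `F0` along the (partial) sequence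
of triggers `ts`. -/
def chainFacts (F0 : Finset Atom) (ts : ℕ → Option Trigger) : ℕ → Finset Atom
  | 0 => F0
  | i + 1 =>
    chainFacts F0 ts i ∪
      (match ts i with
        | some t => t.output
        | none => ∅)

/-- A derivation from the knowledge base `(F0, 𝓡)`: a (possibly infinite) sequence
of pairwise distinct triggers of rules of `𝓡`, each applicable on the factbase
produced so far. -/
structure Derivation (𝓡 : Set Rule) (F0 : Finset Atom) : Type where
  ts : ℕ → Option Trigger
  mem_rules : ∀ i t, ts i = some t → t.rule ∈ 𝓡
  applic : ∀ i t, ts i = some t → t.applicableOn (chainFacts F0 ts i)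
  distinct : ∀ i j t, ts i = some t → ts j = some t → i = j

namespace Derivation

variable {𝓡 : Set Rule} {F0 : Finset Atom}

/-- The factbase `F_i` of the derivation. -/
def facts (D : Derivation 𝓡 F0) (i : ℕ) : Finset Atom := chainFacts F0 D.ts i

/-- `F^D`, the set of all atoms inferred by the derivation. -/
def allFacts (D : Derivation 𝓡 F0) : Set Atom := ⋃ i, ↑(D.facts i)

/-- The set of triggers used by the derivation. -/
def trigSet (D : Derivation 𝓡 F0) : Set Trigger := {t | ∃ i, D.ts i = some t}

/-- The list of the triggers of `D` at positions `< i`, in order. -/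
def hist (D : Derivation 𝓡 F0) (i : ℕ) : List Trigger := (List.range i).filterMap D.ts

def rankAux (D : Derivation 𝓡 F0) : ℕ → Atom → ℕ
  | 0, _ => 0
  | i + 1, A =>
    if A ∈ D.facts i then D.rankAux i A
    else
      match D.ts i with
      | some t => t.support.sup (D.rankAux i) + 1
      | none => 0

open Classical in
/-- The rank of an atom in a derivation (`0` for atoms not inferred by `D`): initial
atoms have rank 0, and an atom produced by a trigger has rank one plus the maximal
rank of the atoms in the support of this trigger. -/
noncomputable def rank (D : Derivation 𝓡 F0) (A : Atom) : ℕ :=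
  if h : ∃ i, A ∈ D.facts i then D.rankAux (Nat.find h) A else 0

/-- The rank of the trigger applied at position `i` (`0` if there is none):
one plus the maximal rank of the atoms of its support. -/
noncomputable def trigRank (D : Derivation 𝓡 F0) (i : ℕ) : ℕ :=
  match D.ts i with
  | some t => t.support.sup D.rank + 1
  | none => 0

/-- The depth of a derivation: the maximal rank of its atoms (possibly `⊤`). -/
noncomputable def depth (D : Derivation 𝓡 F0) : ℕ∞ :=
  ⨆ A ∈ D.allFacts, (D.rank A : ℕ∞)

/-- Rank-compatibility: later triggers have larger or equal rank. -/
def RankCompatible (D : Derivation 𝓡 F0) : Prop :=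
  ∀ i j, i < j → D.ts i ≠ none → D.ts j ≠ none → D.trigRank i ≤ D.trigRank j

/-- Position `i` is a rank mark: the next applied trigger has strictly greater rank. -/
def RankMark (D : Derivation 𝓡 F0) (i : ℕ) : Prop :=
  D.ts i ≠ none ∧
    ∃ j, i < j ∧ D.ts j ≠ none ∧ D.trigRank i < D.trigRank j ∧
      ∀ l, i < l → l < j → D.ts l = none

lemma chainFacts_congr (F0 : Finset Atom) (ts ts' : ℕ → Option Trigger) :
    ∀ i, (∀ j, j < i → ts' j = ts j) → chainFacts F0 ts' i = chainFacts F0 ts i := by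
  intro i
  induction i with
  | zero => intro _; rfl
  | succ i ih =>
    intro h
    have h1 := ih (fun j hj => h j (Nat.lt_succ_of_lt hj))
    have h2 := h i (Nat.lt_succ_self i)
    simp only [chainFacts, h1, h2]

/-- The prefix of `D` keeping only the triggers at positions `< k`. -/
def prefixD (D : Derivation 𝓡 F0) (k : ℕ) : Derivation 𝓡 F0 where
  ts := fun i => if i < k then D.ts i else none
  mem_rules := by
    intro i t h
    by_cases hik : i < k
    · exact D.mem_rules i t (by simpa [hik] using h)
    · simp [hik] at h
  applic := by
    intro i t h
    by_cases hik : i < k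
    · have heq : chainFacts F0 (fun i => if i < k then D.ts i else none) i
          = chainFacts F0 D.ts i :=
        chainFacts_congr F0 D.ts _ i (fun j hj => by
          have hjk : j < k := lt_trans hj hik
          simp [hjk])
      rw [heq]
      exact D.applic i t (by simpa [hik] using h)
    · simp [hik] at h
  distinct := by
    intro i j t hi hj
    by_cases hik : i < k
    · by_cases hjk : j < k
      · exact D.distinct i j t (by simpa [hik] using hi) (by simpa [hjk] using hj)
      · simp [hjk] at hj
    · simp [hik] at hi

/-- `D'` agrees with `D` on all positions `< k`, i.e. `D'` extends the `k`-prefix of `D`. -/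
def ExtendsPrefix (D' D : Derivation 𝓡 F0) (k : ℕ) : Prop :=
  ∀ i, i < k → D'.ts i = D.ts i

/-- Finiteness of a derivation. -/
def IsFinite (D : Derivation 𝓡 F0) : Prop := ∃ N, ∀ i, N ≤ i → D.ts i = none

/-- The atom `A` is produced at step `i` of the derivation. -/
def producedAt (D : Derivation 𝓡 F0) (i : ℕ) (A : Atom) : Prop :=
  A ∈ D.facts (i + 1) ∧ A ∉ D.facts i

/-- Edges of the chase graph of `D`. -/
def edge (D : Derivation 𝓡 F0) (A' A : Atom) : Prop :=
  ∃ i t, D.ts i = some t ∧ D.producedAt i A ∧ A' ∈ t.support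

/-- `A'` is an ancestor of `A`: there is a nonempty path from `A'` to `A` in the
chase graph of `D`. -/
def anc (D : Derivation 𝓡 F0) (A' A : Atom) : Prop := Relation.TransGen D.edge A' A

open Classical in
/-- The prime ancestors of `A`: its ancestors lying in the initial factbase. -/
noncomputable def anc0 (D : Derivation 𝓡 F0) (A : Atom) : Finset Atom :=
  F0.filter (fun A' => D.anc A' A)

/-- The factbases of the restriction of `D` to an initial factbase `G`. -/
def restFacts (D : Derivation 𝓡 F0) (G : Finset Atom) : ℕ → Finset Atom
  | 0 => G
  | i + 1 =>
    restFacts D G i ∪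
      (match D.ts i with
        | some t => if t.applicableOn (restFacts D G i) then t.output else ∅
        | none => ∅)

/-- The trigger sequence of the restriction of `D` to `G`: a trigger of `D` is kept
exactly when it is applicable at the corresponding point. -/
def restTs (D : Derivation 𝓡 F0) (G : Finset Atom) : ℕ → Option Trigger := fun i =>
  match D.ts i with
  | some t => if t.applicableOn (restFacts D G i) then some t else none
  | none => none

lemma restTs_eq_some {D : Derivation 𝓡 F0} {G : Finset Atom} {i : ℕ} {t : Trigger}
    (h : restTs D G i = some t) :
    D.ts i = some t ∧ t.applicableOn (restFacts D G i) := by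
  unfold restTs at h
  cases hd : D.ts i with
  | none => rw [hd] at h; simp at h
  | some t' =>
    rw [hd] at h
    dsimp only at h
    by_cases ha : t'.applicableOn (restFacts D G i)
    · rw [if_pos ha] at h
      injection h with h'
      subst h'
      exact ⟨rfl, ha⟩
    · rw [if_neg ha] at h; simp at h

lemma chainFacts_restTs (D : Derivation 𝓡 F0) (G : Finset Atom) (i : ℕ) :
    chainFacts G (restTs D G) i = restFacts D G i := by
  induction i with
  | zero => rfl
  | succ i ih =>
    simp only [chainFacts, restFacts, ih]
    congr 1
    unfold restTs
    cases hd : D.ts i with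
    | none => rfl
    | some t =>
      by_cases ha : t.applicableOn (restFacts D G i) <;> simp [ha]

/-- The restriction of `D` to the initial factbase `G`: the maximal derivation from
`(G,𝓡)` that only uses the triggers of `D`, in the given order. -/
def restrict (D : Derivation 𝓡 F0) (G : Finset Atom) : Derivation 𝓡 G where
  ts := restTs D G
  mem_rules := fun i t h => D.mem_rules i t (restTs_eq_some h).1
  applic := fun i t h => by
    rw [chainFacts_restTs D G i]
    exact (restTs_eq_some h).2
  distinct := fun i j t hi hj =>
    D.distinct i j t (restTs_eq_some hi).1 (restTs_eq_some hj).1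

end Derivation

/-- An applicability condition: a predicate on (previously applied triggers, current
factbase, candidate trigger). A chase variant is the class of derivations induced by
such a condition. -/
def AppCond : Type := List Trigger → Finset Atom → Trigger → Prop

/-- `D` is an X-derivation of the chase variant given by the condition `C`: every
trigger of `D` is `C`-applicable on the corresponding prefix of `D`. -/
def IsDeriv (C : AppCond) {𝓡 : Set Rule} {F0 : Finset Atom} (D : Derivation 𝓡 F0) : Prop :=
  ∀ i t, D.ts i = some t → C (D.hist i) (D.facts i) t

/-- Oblivious applicability: the trigger is applicable and has not been applied before. -/
def OCond : AppCond := fun h F t => t.applicableOn F ∧ t ∉ h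

/-- Semi-oblivious applicability: no previously applied trigger of the same rule maps
the frontier in the same way. -/
def SOCond : AppCond := fun h F t =>
  t.applicableOn F ∧
    ¬ ∃ t' ∈ h, t'.rule = t.rule ∧ ∀ x ∈ t.rule.frontier, t'.πfn x = t.πfn x

/-- Restricted applicability: there is no retraction from `F ∪ output(t)` to `F`. -/
def RCond : AppCond := fun _ F t =>
  t.applicableOn F ∧
    ¬ ∃ σ : ℕ → Term, IsRetraction σ (↑(F ∪ t.output)) (↑F)

/-- Equivalent-chase applicability: there is no homomorphism from `F ∪ output(t)` to `F`. -/
def ECond : AppCond := fun _ F t =>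
  t.applicableOn F ∧
    ¬ ∃ σ : ℕ → Term, IsHomOn σ (↑(F ∪ t.output)) (↑F)

/-- Breadth-first derivations of the chase variant `C`: rank-compatible `C`-derivations
such that at every rank mark the corresponding prefix cannot be properly extended to a
`C`-derivation of the same depth. -/
def IsBF (C : AppCond) {𝓡 : Set Rule} {F0 : Finset Atom} (D : Derivation 𝓡 F0) : Prop :=
  IsDeriv C D ∧ D.RankCompatible ∧
    ∀ i, D.RankMark i →
      ¬ ∃ D' : Derivation 𝓡 F0, IsDeriv C D' ∧ D'.ExtendsPrefix D (i + 1) ∧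
          (∃ j, i + 1 ≤ j ∧ D'.ts j ≠ none) ∧ D'.depth = (D.prefixD (i + 1)).depth

/-- Fairness of a derivation with respect to the condition `C`: every trigger that
becomes applicable is eventually applied or ceases to be applicable. -/
def IsFair (C : AppCond) {𝓡 : Set Rule} {F0 : Finset Atom} (D : Derivation 𝓡 F0) : Prop :=
  ∀ i t, t.rule ∈ 𝓡 → C (D.hist i) (D.facts i) t →
    ∃ k, i ≤ k ∧ (D.ts k = some t ∨ ¬ C (D.hist (k + 1)) (D.facts (k + 1)) t)

/-- A class of derivations (a chase variant). -/
def DerivClass := ∀ (𝓡 : Set Rule) (F0 : Finset Atom), Derivation 𝓡 F0 → Prop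

/-- The class of `C`-derivations. -/
def derivClassOf (C : AppCond) : DerivClass := fun _ _ D => IsDeriv C D

/-- The class of breadth-first `C`-derivations. -/
def bfClassOf (C : AppCond) : DerivClass := fun _ _ D => IsBF C D

/-- The chase variant `X` preserves ancestry: for every `X`-derivation `D` and atom
`A` inferred (but not initial), there is an `X`-derivation from the prime ancestors
of `A` producing `A` at the same rank. -/
def PreservesAncestry (X : DerivClass) : Prop :=
  ∀ (𝓡 : Set Rule) (F : Finset Atom) (D : Derivation 𝓡 F) (A : Atom),
    X 𝓡 F D → A ∈ D.allFacts → A ∉ F →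
      ∃ D' : Derivation 𝓡 (D.anc0 A),
        X 𝓡 (D.anc0 A) D' ∧ A ∈ D'.allFacts ∧ D'.rank A = D.rank A

/-- The chase variant `X` is hereditary: restricting an `X`-derivation to a subset of
the initial factbase again yields an `X`-derivation. -/
def Hereditary (X : DerivClass) : Prop :=
  ∀ (𝓡 : Set Rule) (F G : Finset Atom), G ⊆ F →
    ∀ D : Derivation 𝓡 F, X 𝓡 F D → X 𝓡 G (D.restrict G)


/- The witness of STATEMENT 18: F = {p(x₁,x₁), p(x₂,x₂), r(x₁,x₂)} with variables
x₁, x₂, and the single rule R : p(x,x) ∧ p(y,y) → p(x,y) ∧ p(y,x); predicates p, r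
are encoded as 0, 1, the rule variables x, y as 0, 1 and x₁, x₂ as 10, 11. -/

def x1 : Term := .var 10
def x2 : Term := .var 11

def Rw : Rule :=
  ⟨[⟨0, [.var 0, .var 0]⟩, ⟨0, [.var 1, .var 1]⟩],
   [⟨0, [.var 0, .var 1]⟩, ⟨0, [.var 1, .var 0]⟩]⟩

def Fw : Finset Atom := {⟨0, [x1, x1]⟩, ⟨0, [x2, x2]⟩, ⟨1, [x1, x2]⟩}
def Rsw : Set Rule := {Rw}

/-- The trigger (R, {x ↦ x₁, y ↦ x₂}). -/
def tw : Trigger := ⟨Rw, [(0, x1), (1, x2)]⟩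

/-- The atom p(x₁,x₂). -/
def pAw : Atom := ⟨0, [x1, x2]⟩

/-- F' = {p(x₁,x₁), p(x₂,x₂)}. -/
def Fw' : Finset Atom := {⟨0, [x1, x1]⟩, ⟨0, [x2, x2]⟩}

lemma Trigger.πs_of_existVars_eq_empty {t : Trigger} (h : t.rule.existVars = ∅) :
    t.πs = t.πfn := by
  ext1 n
  simp [Trigger.πs, h]

namespace Derivation

variable {𝓡 : Set Rule} {F0 : Finset Atom}

lemma chainFacts_of_forall_lt_eq_none {ts : ℕ → Option Trigger} {i : ℕ}
    (h : ∀ j < i, ts j = none) : chainFacts F0 ts i = F0 := by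
  induction i with
  | zero => rfl
  | succ i ih =>
    simp only [chainFacts, ih (fun j hj => h j (Nat.lt_succ_of_lt hj)), h i (Nat.lt_succ_self i),
      Finset.union_empty]

open Classical in
lemma anc0_subset (D : Derivation 𝓡 F0) (A : Atom) : D.anc0 A ⊆ F0 :=
  Finset.filter_subset _ _

section Empty

variable {D : Derivation 𝓡 F0}

lemma facts_of_forall_ts_eq_none (h : ∀ i, D.ts i = none) (i : ℕ) : D.facts i = F0 :=
  chainFacts_of_forall_lt_eq_none fun j _ => h j

lemma allFacts_of_forall_ts_eq_none (h : ∀ i, D.ts i = none) : D.allFacts = F0 := by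
  simp only [allFacts, facts_of_forall_ts_eq_none h, Set.iUnion_const]

lemma rankAux_of_forall_ts_eq_none (h : ∀ i, D.ts i = none) (k : ℕ) (A : Atom) :
    D.rankAux k A = 0 := by
  induction k generalizing A with
  | zero => rfl
  | succ k ih =>
    unfold rankAux
    rw [h k]
    split
    · exact ih A
    · rfl

lemma depth_of_forall_ts_eq_none (h : ∀ i, D.ts i = none) : D.depth = 0 := by
  refine nonpos_iff_eq_zero.mp (iSup₂_le fun A _ => ?_)
  unfold rank
  split
  · simp [rankAux_of_forall_ts_eq_none h]
  · simp

lemma ts_eq_none_of_forall_not_appCond {C : AppCond} (hC : ∀ h t, t.rule ∈ 𝓡 → ¬ C h F0 t)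
    (hD : IsDeriv C D) (i : ℕ) : D.ts i = none := by
  induction i using Nat.strong_induction_on with
  | _ i ih =>
    refine Option.eq_none_iff_forall_ne_some.mpr fun t ht => hC (D.hist i) t (D.mem_rules i t ht) ?_
    have hfacts : D.facts i = F0 := chainFacts_of_forall_lt_eq_none ih
    have hCt := hD i t ht
    rwa [hfacts] at hCt

end Empty

section Single

variable {t : Trigger} {hR : t.rule ∈ 𝓡} {ht : t.applicableOn F0}

variable (t hR ht) in
def single : Derivation 𝓡 F0 where
  ts i := if i = 0 then some t else none
  mem_rules i t' h := by
    split_ifs at h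
    exact Option.some_inj.mp h ▸ hR
  applic i t' h := by
    split_ifs at h with hi
    subst hi
    exact Option.some_inj.mp h ▸ ht
  distinct i j t' hi hj := by
    split_ifs at hi hj with hi' hj'
    rw [hi', hj']

lemma ts_single_eq_some {i : ℕ} {t' : Trigger} :
    (single t hR ht).ts i = some t' ↔ i = 0 ∧ t' = t := by
  simp only [single]
  split_ifs with hi <;> simp [hi, eq_comm]

lemma eq_zero_of_ts_single_ne_none {i : ℕ} (h : (single t hR ht).ts i ≠ none) : i = 0 := by
  by_contra hi
  exact h (if_neg hi)

lemma facts_single_succ (i : ℕ) : (single t hR ht).facts (i + 1) = F0 ∪ t.output := by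
  induction i with
  | zero => rfl
  | succ i ih =>
    rw [← ih]
    show (single t hR ht).facts (i + 1) ∪ _ = _
    simp [single]

lemma mem_allFacts_single {A : Atom} (hA : A ∈ t.output) : A ∈ (single t hR ht).allFacts :=
  Set.mem_iUnion.mpr ⟨1, by simp [facts_single_succ, hA]⟩

lemma rank_single_of_mem_output {A : Atom} (hA : A ∈ t.output) (hA0 : A ∉ F0) :
    (single t hR ht).rank A = 1 := by
  have hex : ∃ i, A ∈ (single t hR ht).facts i := ⟨1, by simp [facts_single_succ, hA]⟩
  have hfind : Nat.find hex = 1 :=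
    (Nat.find_eq_iff hex).mpr ⟨by simp [facts_single_succ, hA], by
      intro n hn; interval_cases n; exact hA0⟩
  simp only [rank, dif_pos hex, hfind, rankAux]
  simp [hA0, single, facts, chainFacts]

lemma edge_single_iff {A' A : Atom} :
    (single t hR ht).edge A' A ↔ A' ∈ t.support ∧ A ∈ t.output ∧ A ∉ F0 := by
  constructor
  · rintro ⟨i, t', hts, ⟨hA, hA0⟩, hA'⟩
    obtain ⟨rfl, rfl⟩ := ts_single_eq_some.mp hts
    rw [facts_single_succ, Finset.mem_union] at hA
    exact ⟨hA', hA.resolve_left hA0, hA0⟩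
  · rintro ⟨hA', hA, hA0⟩
    exact ⟨0, t, ts_single_eq_some.mpr ⟨rfl, rfl⟩, ⟨by simp [facts_single_succ, hA], hA0⟩, hA'⟩

/-- Atoms produced by `t` lie outside `F0` while its support lies inside, so every path
of the chase graph has length one. -/
lemma anc_single_iff {A' A : Atom} :
    (single t hR ht).anc A' A ↔ A' ∈ t.support ∧ A ∈ t.output ∧ A ∉ F0 := by
  refine ⟨fun h => ?_, fun h => .single (edge_single_iff.mpr h)⟩
  induction h with
  | single h => exact edge_single_iff.mp h
  | tail _ hBA ih => exact absurd (ht (edge_single_iff.mp hBA).1) ih.2.2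

lemma anc0_single {A : Atom} (hA : A ∈ t.output) (hA0 : A ∉ F0) :
    (single t hR ht).anc0 A = t.support := by
  ext A'
  simp only [anc0, Finset.mem_filter, anc_single_iff, hA, hA0, not_false_eq_true, and_true]
  exact ⟨And.right, fun h => ⟨ht h, h⟩⟩

lemma isDeriv_single {C : AppCond} (hC : C [] F0 t) : IsDeriv C (single t hR ht) := by
  intro i t' h
  obtain ⟨rfl, rfl⟩ := ts_single_eq_some.mp h
  exact hC

lemma isBF_single {C : AppCond} (hC : C [] F0 t) : IsBF C (single t hR ht) := by
  refine ⟨isDeriv_single hC, fun i j hij hi hj => ?_, fun i ⟨hi, j, hij, hj, _⟩ => ?_⟩ <;>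
    · have := eq_zero_of_ts_single_ne_none hi
      have := eq_zero_of_ts_single_ne_none hj
      omega

end Single

end Derivation

lemma not_preservesAncestry_of_forall_ts_eq_none {X : DerivClass} {𝓡 : Set Rule}
    {F : Finset Atom} {D : Derivation 𝓡 F} {A : Atom} (hD : X 𝓡 F D) (hA : A ∈ D.allFacts)
    (hAF : A ∉ F) (hanc : ∀ D' : Derivation 𝓡 (D.anc0 A), X 𝓡 _ D' → ∀ i, D'.ts i = none) :
    ¬ PreservesAncestry X := by
  intro h
  obtain ⟨D', hX, hA', -⟩ := h 𝓡 F D A hD hA hAF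
  rw [Derivation.allFacts_of_forall_ts_eq_none (hanc D' hX)] at hA'
  exact hAF (Derivation.anc0_subset D A hA')

lemma subst_const_x1_of_mem {u v : Term} (hu : u = x1 ∨ u = x2) (hv : v = x1 ∨ v = x2) :
    (⟨0, [u, v]⟩ : Atom).subst (fun _ => x1) = ⟨0, [x1, x1]⟩ := by
  rcases hu with rfl | rfl <;> rcases hv with rfl | rfl <;> rfl

lemma not_eCond_Fw' (hist : List Trigger) (t : Trigger) (ht : t.rule ∈ Rsw) :
    ¬ ECond hist Fw' t := by
  rintro ⟨happ, hno⟩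
  have hR : t.rule = Rw := ht
  have hmem : ∀ v, v = 0 ∨ v = 1 → t.πfn v = x1 ∨ t.πfn v = x2 := by
    intro v hv
    have hsupp : (⟨0, [t.πfn v, t.πfn v]⟩ : Atom) ∈ t.support := by
      rcases hv with rfl | rfl <;> simp [Trigger.support, hR, Rw, Atom.subst, Term.subst]
    simpa [Fw'] using happ hsupp
  refine hno ⟨fun _ => x1, fun A hA => ?_⟩
  simp only [Finset.coe_union, Set.mem_union, Finset.mem_coe, Fw', Finset.mem_insert,
    Finset.mem_singleton, Trigger.output, Trigger.πs_of_existVars_eq_empty (by rw [hR]; decide),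
    hR, Rw, List.map, List.toFinset_cons, List.toFinset_nil, Finset.notMem_empty, or_false,
    Atom.subst, Term.subst] at hA
  have h0 := hmem 0 (.inl rfl)
  have h1 := hmem 1 (.inr rfl)
  rcases hA with (rfl | rfl) | rfl | rfl <;>
    simp only [Finset.mem_coe, Fw', Finset.mem_insert, Finset.mem_singleton, true_or,
      subst_const_x1_of_mem (.inl rfl) (.inl rfl), subst_const_x1_of_mem (.inr rfl) (.inr rfl),
      subst_const_x1_of_mem h0 h1, subst_const_x1_of_mem h1 h0]

lemma eCond_tw : ECond [] Fw tw := by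
  refine ⟨by decide, ?_⟩
  rintro ⟨σ, hσ⟩
  have hr := hσ ⟨1, [x1, x2]⟩ (Finset.mem_coe.mpr (by decide))
  have hp := hσ pAw (Finset.mem_coe.mpr (by decide))
  simp only [Atom.subst, Term.subst, x1, x2, Fw, pAw, List.map, Finset.coe_insert,
    Finset.coe_singleton, Set.mem_insert_iff, Set.mem_singleton_iff, Atom.mk.injEq] at hr hp
  obtain ⟨hx1, hx2⟩ : σ 10 = .var 10 ∧ σ 11 = .var 11 := by simpa using hr
  simp [hx1, hx2] at hp

/-- neither the equivalent chase nor the breadth-first equivalent chase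
preserves ancestry, witnessed by the bf-E-derivation applying the single trigger
(R,{x↦x₁,y↦x₂}), which produces p(x₁,x₂) at rank 1 with prime ancestors F', while no
E-derivation from (F',𝓡) has depth 1. -/
theorem statement18 :
    ¬ PreservesAncestry (derivClassOf ECond) ∧
    ¬ PreservesAncestry (bfClassOf ECond) ∧
    ∃ D : Derivation Rsw Fw,
      D.ts 0 = some tw ∧ (∀ i, 1 ≤ i → D.ts i = none) ∧
      IsBF ECond D ∧ IsDeriv ECond D ∧
      pAw ∈ D.allFacts ∧ D.rank pAw = 1 ∧ D.anc0 pAw = Fw' ∧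
      ¬ ∃ D' : Derivation Rsw Fw', IsDeriv ECond D' ∧ D'.depth = (1 : ℕ∞) := by
  let D : Derivation Rsw Fw := .single tw rfl (by decide)
  have hout : pAw ∈ tw.output := by decide
  have hnotin : pAw ∉ Fw := by decide
  have hanc : D.anc0 pAw = Fw' := (Derivation.anc0_single hout hnotin).trans (by decide)
  have hempty (D' : Derivation Rsw (D.anc0 pAw)) (hD' : IsDeriv ECond D') (i : ℕ) :
      D'.ts i = none :=
    Derivation.ts_eq_none_of_forall_not_appCond (by rw [hanc]; exact not_eCond_Fw') hD' i
  have hmem : pAw ∈ D.allFacts := Derivation.mem_allFacts_single hout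
  refine ⟨not_preservesAncestry_of_forall_ts_eq_none (Derivation.isDeriv_single eCond_tw) hmem
      hnotin hempty,
    not_preservesAncestry_of_forall_ts_eq_none (Derivation.isBF_single eCond_tw) hmem hnotin
      fun D' hD' => hempty D' hD'.1,
    D, rfl, fun i hi => if_neg (by omega), Derivation.isBF_single eCond_tw,
    Derivation.isDeriv_single eCond_tw, hmem, Derivation.rank_single_of_mem_output hout hnotin,
    hanc, ?_⟩
  rintro ⟨D', hD', hdepth⟩
  rw [Derivation.depth_of_forall_ts_eq_none
    (Derivation.ts_eq_none_of_forall_not_appCond not_eCond_Fw' hD')] at hdepth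
  exact zero_ne_one hdepth

end ChasePaper
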